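/- arXiv:2103.16351 — 2 statements merged into one kernel-verified Lean document; each statement's English description precedes it below -/
import Mathlib

section
/- If A is a symmetric positive definite N×N real matrix and the index set {1,...,N} is partitioned into blocks S_1,...,S_M, then the matrix à defined by Ã_{S_k,S_k} = A_{S_k,S_k} and Ã_{S_k,S_l} = (1/2) A_{S_k,S_l} for k ≠ l is also positive definite. -/
/-! `blockTilde A P` is the average of `A` and its block-diagonal part `D`. Writing `Eₖ` for the
coordinate projection onto the `k`-th block, `D = ∑ₖ Eₖ A Eₖ` is a sum of congruences of `A`,
hence positive semidefinite, so `(A + D) / 2` is positive definite. -/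

open Matrix

/-- The block-modified matrix: keep diagonal blocks (same group under `P`),
halve off-diagonal blocks. -/
noncomputable def blockTilde {N M : ℕ} (A : Matrix (Fin N) (Fin N) ℝ) (P : Fin N → Fin M) :
    Matrix (Fin N) (Fin N) ℝ :=
  fun i j => if P i = P j then A i j else A i j / 2

namespace Matrix

variable {n m R : Type*} [DecidableEq m]

def blockDiagPart [Zero R] (A : Matrix n n R) (P : n → m) : Matrix n n R :=
  fun i j => if P i = P j then A i j else 0

def blockProjection [DecidableEq n] [Zero R] [One R] (P : n → m) (k : m) : Matrix n n R :=
  diagonal fun i => if P i = k then 1 else 0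

variable [Fintype n] [DecidableEq n] [Fintype m]

theorem blockDiagPart_eq_sum [Semiring R] (A : Matrix n n R) (P : n → m) :
    A.blockDiagPart P = ∑ k, blockProjection P k * A * blockProjection P k := by
  ext i j
  simp [blockDiagPart, blockProjection, sum_apply, diagonal_mul, mul_diagonal]

theorem PosSemidef.blockDiagPart [Ring R] [PartialOrder R] [StarRing R] [AddLeftMono R]
    {A : Matrix n n R} (hA : A.PosSemidef) (P : n → m) : (A.blockDiagPart P).PosSemidef := by
  rw [blockDiagPart_eq_sum]
  refine posSemidef_sum _ fun k _ => ?_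
  have hself : (blockProjection P k : Matrix n n R)ᴴ = blockProjection P k := by
    simp [blockProjection, diagonal_conjTranspose, apply_ite star]
  simpa [hself] using hA.conjTranspose_mul_mul_same (blockProjection P k)

end Matrix

theorem blockTilde_eq_half_smul {N M : ℕ} (A : Matrix (Fin N) (Fin N) ℝ) (P : Fin N → Fin M) :
    blockTilde A P = (1 / 2 : ℝ) • (A + A.blockDiagPart P) := by
  ext i j
  by_cases h : P i = P j <;> simp [blockTilde, blockDiagPart, h] <;> ring

theorem stmt0_general {N M : ℕ} (A : Matrix (Fin N) (Fin N) ℝ) (P : Fin N → Fin M)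
    (hApd : A.PosDef) : (blockTilde A P).PosDef := by
  rw [blockTilde_eq_half_smul]
  exact (hApd.add_posSemidef (hApd.posSemidef.blockDiagPart P)).smul (by norm_num)

/-- If `A` is symmetric positive definite and the indices are partitioned into groups
(via the group-assignment map `P`), then the matrix keeping diagonal blocks and halving
off-diagonal blocks is also positive definite. -/
theorem stmt0 {N M : ℕ} (A : Matrix (Fin N) (Fin N) ℝ) (P : Fin N → Fin M)
    (hA : A.IsSymm) (hApd : A.PosDef) : (blockTilde A P).PosDef :=
  stmt0_general A P hApd
end

section
/- Suppose y* satisfies the non-cooperative KKT conditions A_{S_k,S_k} y*_{S_k} + (1/2) Σ_{l≠k} A_{S_k,S_l} y*_{S_l} = 2 λ*_k y*_{S_k} with ‖y*_{S_k}‖² = C_k for all k. Then the social welfare W(y*) = (1/2)(y*)ᵀ A y* satisfies W(y*) ≥ Σ_{k=1}^M (2λ*_k − (1/2)ρ_k) C_k, where ρ_k is the spectral radius (largest eigenvalue) of A_{S_k,S_k}. -/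
/-!
Multiplying the `i`-th stationarity equation by `y*_i` and summing over `i` gives
`Σ_k q_k + (1/2) Σ_{k ≠ l} (y*_{S_k})ᵀ A_{S_k,S_l} y*_{S_l} = 2 Σ_k λ*_k C_k`, where
`q_k = (y*_{S_k})ᵀ A_{S_k,S_k} y*_{S_k}`. The cross terms are `(y*)ᵀ A y* - Σ_k q_k`, so
`(1/2)(y*)ᵀ A y* = 2 Σ_k λ*_k C_k - (1/2) Σ_k q_k`, and `q_k ≤ ρ_k C_k` finishes the bound.
-/

open Matrix Finset

variable {ι κ R : Type*} [Fintype ι] [DecidableEq κ]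

/-- The vector `y_{S_k}` extended by zero, where `S_k = P⁻¹{k}`. -/
def blockRestrict [Zero R] (P : ι → κ) (k : κ) (y : ι → R) : ι → R :=
  fun i => if P i = k then y i else 0

section CommSemiring

variable [CommSemiring R] (P : ι → κ) (k : κ) (y : ι → R)

theorem blockRestrict_dotProduct (v : ι → R) :
    blockRestrict P k y ⬝ᵥ v = ∑ i with P i = k, y i * v i := by
  simp [blockRestrict, dotProduct, sum_filter, ite_mul]

theorem mulVec_blockRestrict (A : Matrix ι ι R) (i : ι) :
    (A *ᵥ blockRestrict P k y) i = ∑ j with P j = k, A i j * y j := by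
  simp [blockRestrict, mulVec, dotProduct, sum_filter, mul_ite]

theorem blockRestrict_dotProduct_self :
    blockRestrict P k y ⬝ᵥ blockRestrict P k y = ∑ i with P i = k, y i ^ 2 := by
  rw [blockRestrict_dotProduct]
  refine sum_congr rfl fun i hi => ?_
  simp [blockRestrict, (mem_filter.1 hi).2, sq]

variable [Fintype κ]

theorem sum_blockRestrict_quadForm (A : Matrix ι ι R) :
    ∑ k, blockRestrict P k y ⬝ᵥ A *ᵥ blockRestrict P k y =
      ∑ i, y i * ∑ j with P j = P i, A i j * y j := by
  simp_rw [blockRestrict_dotProduct, mulVec_blockRestrict]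
  rw [← sum_fiberwise univ P]
  refine sum_congr rfl fun k _ => sum_congr rfl fun i hi => ?_
  rw [(mem_filter.1 hi).2]

theorem sum_mul_sq_eq_sum_fiberwise (f : κ → R) :
    ∑ i, f (P i) * y i ^ 2 = ∑ k, f k * ∑ i with P i = k, y i ^ 2 := by
  rw [← sum_fiberwise univ P]
  refine sum_congr rfl fun k _ => ?_
  rw [mul_sum]
  refine sum_congr rfl fun i hi => ?_
  rw [(mem_filter.1 hi).2]

end CommSemiring

theorem quadForm_eq_of_blockwise_stationary [Fintype κ] [Field R] [CharZero R] (A : Matrix ι ι R)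
    (P : ι → κ) (lam : κ → R) (y : ι → R)
    (hstat : ∀ i, (∑ j with P j = P i, A i j * y j) +
        1 / 2 * (∑ j with P j ≠ P i, A i j * y j) = 2 * lam (P i) * y i) :
    1 / 2 * (y ⬝ᵥ A *ᵥ y) + 1 / 2 * ∑ k, blockRestrict P k y ⬝ᵥ A *ᵥ blockRestrict P k y =
      2 * ∑ i, lam (P i) * y i ^ 2 := by
  have hrow : ∀ i, (A *ᵥ y) i =
      (∑ j with P j = P i, A i j * y j) + ∑ j with P j ≠ P i, A i j * y j := fun i =>
    (sum_filter_add_sum_filter_not _ _ _).symm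
  have hweighted : ∀ i, 1 / 2 * (y i * ∑ j with P j = P i, A i j * y j) +
      1 / 2 * (y i * (A *ᵥ y) i) = 2 * (lam (P i) * y i ^ 2) := fun i => by
    linear_combination (1 / 2 * y i) * hrow i + y i * hstat i
  have hsum := sum_congr rfl fun i (_ : i ∈ univ) => hweighted i
  rw [sum_add_distrib, ← mul_sum, ← mul_sum, ← mul_sum] at hsum
  rw [sum_blockRestrict_quadForm, dotProduct]
  linear_combination hsum

theorem stmt10_general {N M : ℕ} (A : Matrix (Fin N) (Fin N) ℝ) (P : Fin N → Fin M)
    (C lam rho : Fin M → ℝ) (ystar : Fin N → ℝ)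
    (hstat : ∀ i, (∑ j ∈ Finset.univ.filter (fun j => P j = P i), A i j * ystar j) +
        (1/2) * (∑ j ∈ Finset.univ.filter (fun j => P j ≠ P i), A i j * ystar j) =
        2 * lam (P i) * ystar i)
    (hbudget : ∀ k, (∑ i ∈ Finset.univ.filter (fun i => P i = k), (ystar i)^2) = C k)
    (hrho : ∀ k, ∀ z : Fin N → ℝ, (∀ i, P i ≠ k → z i = 0) →
        z ⬝ᵥ A *ᵥ z ≤ rho k * (z ⬝ᵥ z)) :
    (1/2) * (ystar ⬝ᵥ A *ᵥ ystar) ≥ ∑ k : Fin M, (2 * lam k - (1/2) * rho k) * C k := by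
  have hblock : ∀ k, blockRestrict P k ystar ⬝ᵥ A *ᵥ blockRestrict P k ystar ≤ rho k * C k :=
    fun k => by
      simpa only [blockRestrict_dotProduct_self, hbudget] using
        hrho k (blockRestrict P k ystar) fun i hi => if_neg hi
  have hidentity := quadForm_eq_of_blockwise_stationary A P lam ystar hstat
  rw [sum_mul_sq_eq_sum_fiberwise] at hidentity
  simp only [hbudget] at hidentity
  have hsplit : ∑ k, (2 * lam k - 1 / 2 * rho k) * C k =
      2 * ∑ k, lam k * C k - 1 / 2 * ∑ k, rho k * C k := by
    simp only [mul_sum, ← sum_sub_distrib]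
    exact sum_congr rfl fun k _ => by ring
  linarith [sum_le_sum fun k (_ : k ∈ univ) => hblock k]

/-- If `y*` satisfies the non-cooperative KKT conditions
`A_{S_k,S_k} y*_{S_k} + (1/2) Σ_{l≠k} A_{S_k,S_l} y*_{S_l} = 2 λ*_k y*_{S_k}` and
`‖y*_{S_k}‖² = C_k` for every group `k`, then the social welfare satisfies
`(1/2)(y*)ᵀ A y* ≥ Σ_k (2 λ*_k - ρ_k/2) C_k`, where `ρ_k` bounds the quadratic form of
the diagonal block `A_{S_k,S_k}` (spectral radius). -/
theorem stmt10 {N M : ℕ} (A : Matrix (Fin N) (Fin N) ℝ) (hsymm : A.IsSymm)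
    (hA : A.PosDef) (P : Fin N → Fin M) (C lam rho : Fin M → ℝ)
    (hC : ∀ k, 0 < C k) (hlam : ∀ k, 0 ≤ lam k) (ystar : Fin N → ℝ)
    (hstat : ∀ i, (∑ j ∈ Finset.univ.filter (fun j => P j = P i), A i j * ystar j) +
        (1/2) * (∑ j ∈ Finset.univ.filter (fun j => P j ≠ P i), A i j * ystar j) =
        2 * lam (P i) * ystar i)
    (hbudget : ∀ k, (∑ i ∈ Finset.univ.filter (fun i => P i = k), (ystar i)^2) = C k)
    (hrho : ∀ k, ∀ z : Fin N → ℝ, (∀ i, P i ≠ k → z i = 0) →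
        z ⬝ᵥ A *ᵥ z ≤ rho k * (z ⬝ᵥ z)) :
    (1/2) * (ystar ⬝ᵥ A *ᵥ ystar) ≥ ∑ k : Fin M, (2 * lam k - (1/2) * rho k) * C k :=
  stmt10_general A P C lam rho ystar hstat hbudget hrho
end
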